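/- In a connected graph X, any minimal-mass real 1-chain filling a 0-cycle with integer coefficients can be chosen with integer coefficients; more precisely, the infimum of the ℓ¹-norm over real 1-chains β with ∂β = c, where c is an integral 0-cycle (a finitely supported function on vertices with total sum zero), is attained by an integral 1-chain. -/

import Mathlib

/-- The boundary of a cellular 1-chain on the graph with edge-endpoint maps `s`, `t`. -/
noncomputable def graphBoundary {V E : Type} (s t : E → V) {R : Type} [AddCommGroup R]
    (β : E →₀ R) : V →₀ R :=
  β.sum fun e r => Finsupp.single (t e) r - Finsupp.single (s e) r

/-- Two vertices are connected by an edge (in either orientation). -/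
def graphAdj {V E : Type} (s t : E → V) (a b : V) : Prop :=
  ∃ e, (s e = a ∧ t e = b) ∨ (s e = b ∧ t e = a)

/-!
An integral filling exists by connectedness, and among integral fillings there is one of least
mass because these masses are natural numbers. So it suffices to round any real filling `β` of
an integral cycle to an integral one of no larger mass.

Reduced mod `ℤ`, `β` is a cycle supported on its fractional edges, so no vertex meets exactly
one of them: these edges span at most as many vertices as there are edges. Since boundaries
have coefficient sum zero, rank–nullity then yields a nonzero real cycle `σ` on the fractional
edges. Along `β + θ • σ` the mass is affine in `θ` until some coefficient reaches an integer;
orienting `σ` so that the mass does not increase and stopping at the first such `θ` removes an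
edge from the fractional ones, and induction on their number finishes the argument.
-/

namespace GraphChain

open Finset

variable {V E : Type} (s t : E → V)

section AddCommGroup

variable {R : Type} [AddCommGroup R]

theorem graphBoundary_eq_mapDomain_sub (β : E →₀ R) :
    graphBoundary s t β = β.mapDomain t - β.mapDomain s :=
  Finsupp.sum_sub

variable (R) in
noncomputable def graphBoundaryₗ (S : Type) [Semiring S] [Module S R] :
    (E →₀ R) →ₗ[S] V →₀ R :=
  Finsupp.lmapDomain R S t - Finsupp.lmapDomain R S s

@[simp]
theorem graphBoundaryₗ_apply (S : Type) [Semiring S] [Module S R] (β : E →₀ R) :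
    graphBoundaryₗ s t R S β = graphBoundary s t β :=
  (graphBoundary_eq_mapDomain_sub s t β).symm

theorem graphBoundary_add (β₁ β₂ : E →₀ R) :
    graphBoundary s t (β₁ + β₂) = graphBoundary s t β₁ + graphBoundary s t β₂ := by
  simpa using map_add (graphBoundaryₗ s t R ℕ) β₁ β₂

theorem graphBoundary_neg (β : E →₀ R) : graphBoundary s t (-β) = -graphBoundary s t β := by
  simpa using map_neg (graphBoundaryₗ s t R ℤ) β

theorem graphBoundary_sub (β₁ β₂ : E →₀ R) :
    graphBoundary s t (β₁ - β₂) = graphBoundary s t β₁ - graphBoundary s t β₂ := by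
  simpa using map_sub (graphBoundaryₗ s t R ℤ) β₁ β₂

theorem graphBoundary_smul {S : Type} [Semiring S] [Module S R] (a : S) (β : E →₀ R) :
    graphBoundary s t (a • β) = a • graphBoundary s t β := by
  simpa only [graphBoundaryₗ_apply] using map_smul (graphBoundaryₗ s t R S) a β

theorem graphBoundary_single (e : E) (r : R) :
    graphBoundary s t (Finsupp.single e r) = Finsupp.single (t e) r - Finsupp.single (s e) r := by
  simp [graphBoundary_eq_mapDomain_sub]

theorem graphBoundary_mapRange {R' : Type} [AddCommGroup R'] (f : R →+ R') (β : E →₀ R) :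
    graphBoundary s t (β.mapRange f f.map_zero) = (graphBoundary s t β).mapRange f f.map_zero := by
  simp only [graphBoundary_eq_mapDomain_sub, Finsupp.mapRange_sub (map_sub f),
    Finsupp.mapDomain_mapRange _ _ _ _ (map_add f)]

theorem graphBoundary_apply [DecidableEq V] (β : E →₀ R) (v : V) :
    graphBoundary s t β v =
      ∑ e ∈ β.support with t e = v, β e - ∑ e ∈ β.support with s e = v, β e := by
  simp [graphBoundary_eq_mapDomain_sub, Finsupp.mapDomain, Finsupp.sum, Finsupp.single_apply,
    sum_ite]

theorem sum_graphBoundary (β : E →₀ R) : (graphBoundary s t β).sum (fun _ r => r) = 0 := by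
  rw [graphBoundary_eq_mapDomain_sub, Finsupp.sum_sub_index fun _ _ _ => rfl,
    Finsupp.sum_mapDomain_index (fun _ => rfl) fun _ _ _ => rfl,
    Finsupp.sum_mapDomain_index (fun _ => rfl) fun _ _ _ => rfl, sub_self]

theorem support_graphBoundary_subset [DecidableEq V] (β : E →₀ R) :
    (graphBoundary s t β).support ⊆ β.support.image s ∪ β.support.image t := by
  rw [graphBoundary_eq_mapDomain_sub, union_comm]
  exact Finsupp.support_sub.trans (union_subset_union Finsupp.mapDomain_support
    Finsupp.mapDomain_support)

theorem card_incident_ne_one_of_graphBoundary_eq_zero [DecidableEq V] {α : E →₀ R}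
    (hα : graphBoundary s t α = 0) (v : V) :
    #{e ∈ α.support | s e = v} + #{e ∈ α.support | t e = v} ≠ 1 := by
  have hv := graphBoundary_apply s t α v
  rw [hα, Finsupp.zero_apply, eq_comm, sub_eq_zero] at hv
  intro h
  rcases Nat.add_eq_one_iff.1 h with ⟨hs, ht⟩ | ⟨hs, ht⟩
  · obtain ⟨e, he⟩ := card_eq_one.1 ht
    rw [he, card_eq_zero.1 hs, sum_singleton, sum_empty] at hv
    exact Finsupp.mem_support_iff.1 (mem_filter.1 (he ▸ mem_singleton_self e)).1 hv
  · obtain ⟨e, he⟩ := card_eq_one.1 hs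
    rw [he, card_eq_zero.1 ht, sum_singleton, sum_empty] at hv
    exact Finsupp.mem_support_iff.1 (mem_filter.1 (he ▸ mem_singleton_self e)).1 hv.symm

theorem exists_graphBoundary_eq_single_sub_single {u v : V}
    (huv : Relation.ReflTransGen (graphAdj s t) u v) (r : R) :
    ∃ p : E →₀ R, graphBoundary s t p = Finsupp.single v r - Finsupp.single u r := by
  induction huv with
  | refl => exact ⟨0, by simp [graphBoundary]⟩
  | tail _ hwv ih =>
    obtain ⟨p, hp⟩ := ih
    obtain ⟨e, ⟨hs, ht⟩ | ⟨hs, ht⟩⟩ := hwv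
    · exact ⟨p + Finsupp.single e r, by
        rw [graphBoundary_add, hp, graphBoundary_single, hs, ht]; abel⟩
    · exact ⟨p - Finsupp.single e r, by
        rw [graphBoundary_sub, hp, graphBoundary_single, hs, ht]; abel⟩

theorem exists_graphBoundary_eq (hconn : ∀ u v : V, Relation.ReflTransGen (graphAdj s t) u v)
    (c : V →₀ R) (hc : c.sum (fun _ r => r) = 0) : ∃ γ : E →₀ R, graphBoundary s t γ = c := by
  rcases isEmpty_or_nonempty V with hV | ⟨⟨u⟩⟩
  · exact ⟨0, Subsingleton.elim _ _⟩
  choose p hp using fun (v : V) (r : R) =>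
    exists_graphBoundary_eq_single_sub_single s t (hconn u v) r
  refine ⟨c.sum p, ?_⟩
  calc graphBoundary s t (c.sum p)
      = c.sum fun v r => Finsupp.single v r - Finsupp.single u r := by
        simpa [hp] using map_finsuppSum (graphBoundaryₗ s t R ℕ) c p
    _ = c - Finsupp.single u (c.sum fun _ r => r) := by
        rw [Finsupp.sum_sub, Finsupp.sum_single, Finsupp.single_sum]
    _ = c := by rw [hc, Finsupp.single_zero, sub_zero]

end AddCommGroup

theorem exists_ne_zero_support_subset_graphBoundary_eq_zero [DecidableEq V] {K : Type} [Field K]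
    {F : Finset E} (hF : F.Nonempty) (hcard : #(F.image s ∪ F.image t) ≤ #F) :
    ∃ σ : E →₀ K, σ ≠ 0 ∧ σ.support ⊆ F ∧ graphBoundary s t σ = 0 := by
  classical
  obtain ⟨e, he⟩ := hF
  set W := F.image s ∪ F.image t
  have hW : s e ∈ W := mem_union_left _ (mem_image_of_mem s he)
  -- boundaries have coefficient sum zero, so the coordinate at `s e` may be dropped
  let L : (F →₀ K) →ₗ[K] (W.erase (s e) → K) :=
    LinearMap.pi fun v => Finsupp.lapply v.1 ∘ₗ graphBoundaryₗ s t K K ∘ₗ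
      Finsupp.lmapDomain K K Subtype.val
  have hdim : Module.finrank K (W.erase (s e) → K) < Module.finrank K (F →₀ K) := by
    rw [Module.finrank_fintype_fun_eq_card, Module.finrank_finsupp_self]
    simp only [Fintype.card_coe, card_erase_of_mem hW]
    have := card_pos.2 ⟨e, he⟩
    omega
  obtain ⟨σ', hσ'L, hσ'0⟩ :=
    (Submodule.ne_bot_iff _).1 (LinearMap.ker_ne_bot_of_finrank_lt (f := L) hdim)
  set σ := σ'.mapDomain Subtype.val
  have hσF : σ.support ⊆ F := Finsupp.mapDomain_support.trans fun x hx => by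
    obtain ⟨y, -, rfl⟩ := mem_image.1 hx
    exact y.2
  refine ⟨σ, fun h => hσ'0 (Finsupp.mapDomain_injective Subtype.val_injective
    (h.trans Finsupp.mapDomain_zero.symm)), hσF, ?_⟩
  have hoff : ∀ v ≠ s e, graphBoundary s t σ v = 0 := by
    intro v hv
    by_cases hvW : v ∈ W
    · simpa [L] using congr_fun (LinearMap.mem_ker.1 hσ'L) ⟨v, mem_erase.2 ⟨hv, hvW⟩⟩
    · refine Finsupp.notMem_support_iff.1 fun hv' => hvW ?_
      exact union_subset_union (image_subset_image hσF) (image_subset_image hσF)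
        (support_graphBoundary_subset s t σ hv')
  have hat : graphBoundary s t σ (s e) = 0 := by
    have h := sum_graphBoundary s t σ
    rwa [Finsupp.sum_eq_single (s e) (fun v _ hv => hoff v hv) fun _ => rfl] at h
  ext v
  by_cases hv : v = s e
  · rw [hv, hat, Finsupp.zero_apply]
  · rw [hoff v hv, Finsupp.zero_apply]

theorem card_endpoints_le_card [DecidableEq V] {F : Finset E}
    (hF : ∀ v, #{e ∈ F | s e = v} + #{e ∈ F | t e = v} ≠ 1) :
    #(F.image s ∪ F.image t) ≤ #F := by
  set W := F.image s ∪ F.image t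
  have hs : #F = ∑ v ∈ W, #{e ∈ F | s e = v} :=
    card_eq_sum_card_fiberwise fun e he => mem_union_left _ (mem_image_of_mem s he)
  have ht : #F = ∑ v ∈ W, #{e ∈ F | t e = v} :=
    card_eq_sum_card_fiberwise fun e he => mem_union_right _ (mem_image_of_mem t he)
  have hdeg : ∀ v ∈ W, 2 ≤ #{e ∈ F | s e = v} + #{e ∈ F | t e = v} := by
    intro v hv
    have hpos : 0 < #{e ∈ F | s e = v} + #{e ∈ F | t e = v} := by
      rcases mem_union.1 hv with h | h <;> obtain ⟨e, he, hev⟩ := mem_image.1 h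
      · exact Nat.add_pos_left (card_pos.2 ⟨e, mem_filter.2 ⟨he, hev⟩⟩) _
      · exact Nat.add_pos_right _ (card_pos.2 ⟨e, mem_filter.2 ⟨he, hev⟩⟩)
    have := hF v
    omega
  have := sum_le_sum hdeg
  rw [sum_add_distrib, ← hs, ← ht, sum_const, smul_eq_mul] at this
  omega

section Real

noncomputable def mass (β : E →₀ ℝ) : ℝ := β.sum fun _ r => |r|

def intMass (γ : E →₀ ℤ) : ℕ := γ.sum fun _ n => n.natAbs

theorem intMass_cast (γ : E →₀ ℤ) : (intMass γ : ℝ) = ∑ e ∈ γ.support, |(γ e : ℝ)| := by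
  simp [intMass, Finsupp.sum, Nat.cast_natAbs]

theorem mass_mapRange_intCast (γ : E →₀ ℤ) :
    mass (γ.mapRange Int.cast Int.cast_zero) = intMass γ := by
  rw [intMass_cast, mass, Finsupp.sum, Finsupp.support_mapRange_of_injective _ _ Int.cast_injective]
  simp

noncomputable def fracSupport (β : E →₀ ℝ) : Finset E :=
  (β.mapRange (QuotientAddGroup.mk' (AddSubgroup.zmultiples (1 : ℝ))) (map_zero _)).support

theorem mem_fracSupport {β : E →₀ ℝ} {e : E} :
    e ∈ fracSupport β ↔ β e ∉ Set.range Int.cast := by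
  simp [fracSupport, QuotientAddGroup.eq_zero_iff, AddSubgroup.mem_zmultiples_iff]

theorem fracSupport_subset_support (β : E →₀ ℝ) : fracSupport β ⊆ β.support :=
  Finsupp.support_mapRange

theorem exists_mapRange_intCast_eq {β : E →₀ ℝ} (hβ : fracSupport β = ∅) :
    ∃ γ : E →₀ ℤ, γ.mapRange Int.cast Int.cast_zero = β := by
  refine ⟨β.mapRange Int.floor Int.floor_zero, Finsupp.ext fun e => ?_⟩
  obtain ⟨n, hn⟩ : β e ∈ Set.range Int.cast := by
    by_contra h
    simpa [hβ] using mem_fracSupport.2 h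
  simp [← hn]

theorem card_incident_fracSupport_ne_one [DecidableEq V] {β : E →₀ ℝ}
    (hβ : ∀ v, graphBoundary s t β v ∈ Set.range Int.cast) (v : V) :
    #{e ∈ fracSupport β | s e = v} + #{e ∈ fracSupport β | t e = v} ≠ 1 := by
  refine card_incident_ne_one_of_graphBoundary_eq_zero s t ?_ v
  rw [graphBoundary_mapRange]
  ext w
  obtain ⟨n, hn⟩ := hβ w
  simp [← hn]

noncomputable def firstIntTime (x y : ℝ) : ℝ :=
  if 0 < y then (⌈x⌉ - x) / y else (⌊x⌋ - x) / y

theorem firstIntTime_nonneg (x y : ℝ) : 0 ≤ firstIntTime x y := by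
  unfold firstIntTime
  split_ifs with hy
  · exact div_nonneg (sub_nonneg.2 (Int.le_ceil x)) hy.le
  · exact div_nonneg_of_nonpos (sub_nonpos.2 (Int.floor_le x)) (not_lt.1 hy)

theorem add_firstIntTime_mul_mem_range (x : ℝ) {y : ℝ} (hy : y ≠ 0) :
    x + firstIntTime x y * y ∈ Set.range Int.cast := by
  unfold firstIntTime
  split_ifs
  · exact ⟨⌈x⌉, by field_simp; ring⟩
  · exact ⟨⌊x⌋, by field_simp; ring⟩

theorem floor_le_add_mul_le_ceil {x y θ : ℝ} (hθ0 : 0 ≤ θ) (hθ : θ ≤ firstIntTime x y) :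
    (⌊x⌋ : ℝ) ≤ x + θ * y ∧ x + θ * y ≤ ⌈x⌉ := by
  unfold firstIntTime at hθ
  have := Int.floor_le x
  have := Int.le_ceil x
  split_ifs at hθ with hy
  · have := (le_div_iff₀ hy).1 hθ
    constructor <;> nlinarith
  rcases (not_lt.1 hy).lt_or_eq with hy | rfl
  · have := (le_div_iff_of_neg hy).1 hθ
    constructor <;> nlinarith
  · constructor <;> linarith [mul_zero θ]

theorem abs_eq_abs_add_sign_mul_sub {x z : ℝ} (h₁ : (⌊x⌋ : ℝ) ≤ z) (h₂ : z ≤ ⌈x⌉) :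
    |z| = |x| + Real.sign x * (z - x) := by
  rcases lt_trichotomy x 0 with hx | rfl | hx
  · have : (⌈x⌉ : ℝ) ≤ 0 := by exact_mod_cast Int.ceil_le.2 (by simpa using hx.le)
    rw [abs_of_nonpos (h₂.trans this), abs_of_neg hx, Real.sign_of_neg hx]
    ring
  · simp only [Int.floor_zero, Int.ceil_zero, Int.cast_zero] at h₁ h₂
    simp [le_antisymm h₂ h₁]
  · have : (0 : ℝ) ≤ ⌊x⌋ := by exact_mod_cast Int.floor_nonneg.2 hx.le
    rw [abs_of_nonneg (this.trans h₁), abs_of_pos hx, Real.sign_of_pos hx]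
    ring

theorem abs_add_mul_of_le_firstIntTime {x y θ : ℝ} (hθ0 : 0 ≤ θ) (hθ : θ ≤ firstIntTime x y) :
    |x + θ * y| = |x| + θ * (Real.sign x * y) := by
  obtain ⟨h₁, h₂⟩ := floor_le_add_mul_le_ceil hθ0 hθ
  rw [abs_eq_abs_add_sign_mul_sub h₁ h₂]
  ring

theorem mass_add_smul {β σ : E →₀ ℝ} (hσ : σ.support ⊆ β.support) {θ : ℝ} (hθ0 : 0 ≤ θ)
    (hθ : ∀ e ∈ σ.support, θ ≤ firstIntTime (β e) (σ e)) :
    mass (β + θ • σ) = mass β + θ * ∑ e ∈ β.support, Real.sign (β e) * σ e := by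
  classical
  have hsupp : (β + θ • σ).support ⊆ β.support :=
    Finsupp.support_add.trans (union_subset subset_rfl (Finsupp.support_smul.trans hσ))
  rw [mass, mass, Finsupp.sum_of_support_subset _ hsupp _ fun _ _ => abs_zero, Finsupp.sum,
    mul_sum, ← sum_add_distrib]
  refine sum_congr rfl fun e _ => ?_
  by_cases he : e ∈ σ.support
  · simpa using abs_add_mul_of_le_firstIntTime hθ0 (hθ e he)
  · simp [Finsupp.notMem_support_iff.1 he]

theorem exists_mass_add_smul_le_fracSupport_ssubset {β σ : E →₀ ℝ} (hσ0 : σ ≠ 0)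
    (hσF : σ.support ⊆ fracSupport β) (hslope : ∑ e ∈ β.support, Real.sign (β e) * σ e ≤ 0) :
    ∃ θ : ℝ, mass (β + θ • σ) ≤ mass β ∧ fracSupport (β + θ • σ) ⊂ fracSupport β := by
  obtain ⟨e₀, he₀, hmin⟩ := σ.support.exists_min_image (fun e => firstIntTime (β e) (σ e))
    (Finsupp.support_nonempty_iff.2 hσ0)
  set θ := firstIntTime (β e₀) (σ e₀)
  have hθ0 : 0 ≤ θ := firstIntTime_nonneg _ _
  refine ⟨θ, ?_, ?_⟩
  · rw [mass_add_smul (hσF.trans (fracSupport_subset_support β)) hθ0 hmin]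
    linarith [mul_nonpos_of_nonneg_of_nonpos hθ0 hslope]
  have hsub : fracSupport (β + θ • σ) ⊆ fracSupport β := by
    intro e he
    by_cases hσe : σ e = 0
    · simpa [mem_fracSupport, hσe] using he
    · exact hσF (Finsupp.mem_support_iff.2 hσe)
  refine (ssubset_iff_of_subset hsub).2 ⟨e₀, hσF he₀, ?_⟩
  rw [mem_fracSupport, not_not]
  simpa using add_firstIntTime_mul_mem_range (β e₀) (Finsupp.mem_support_iff.1 he₀)

theorem exists_mass_le_fracSupport_ssubset {β : E →₀ ℝ}
    (hβ : ∀ v, graphBoundary s t β v ∈ Set.range Int.cast) (hF : (fracSupport β).Nonempty) :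
    ∃ β' : E →₀ ℝ, graphBoundary s t β' = graphBoundary s t β ∧ mass β' ≤ mass β ∧
      fracSupport β' ⊂ fracSupport β := by
  classical
  obtain ⟨σ, hσ0, hσF, hσ⟩ := exists_ne_zero_support_subset_graphBoundary_eq_zero s t (K := ℝ) hF
    (card_endpoints_le_card s t (card_incident_fracSupport_ne_one s t hβ))
  wlog hslope : ∑ e ∈ β.support, Real.sign (β e) * σ e ≤ 0 generalizing σ
  · refine this (-σ) (neg_ne_zero.2 hσ0) (by rwa [Finsupp.support_neg])
      (by rw [graphBoundary_neg, hσ, neg_zero]) ?_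
    simp only [Finsupp.neg_apply, mul_neg, sum_neg_distrib]
    linarith
  obtain ⟨θ, hmass, hfrac⟩ := exists_mass_add_smul_le_fracSupport_ssubset hσ0 hσF hslope
  refine ⟨β + θ • σ, ?_, hmass, hfrac⟩
  rw [graphBoundary_add, graphBoundary_smul, hσ, smul_zero, add_zero]

theorem exists_intChain_graphBoundary_eq_intMass_le (β : E →₀ ℝ)
    (hβ : ∀ v, graphBoundary s t β v ∈ Set.range Int.cast) :
    ∃ γ : E →₀ ℤ, graphBoundary s t (γ.mapRange Int.cast Int.cast_zero) = graphBoundary s t β ∧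
      (intMass γ : ℝ) ≤ mass β := by
  induction hn : #(fracSupport β) using Nat.strong_induction_on generalizing β with
  | _ n ih =>
  rcases (fracSupport β).eq_empty_or_nonempty with hF | hF
  · obtain ⟨γ, rfl⟩ := exists_mapRange_intCast_eq hF
    exact ⟨γ, rfl, (mass_mapRange_intCast γ).ge⟩
  · obtain ⟨β', hβ', hmass, hlt⟩ := exists_mass_le_fracSupport_ssubset s t hβ hF
    obtain ⟨γ, hγ, hγm⟩ := ih _ (hn ▸ card_lt_card hlt) β' (hβ' ▸ hβ) rfl
    exact ⟨γ, hγ.trans hβ', hγm.trans hmass⟩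

end Real

end GraphChain

open GraphChain in
/-- In a connected graph `X`, the infimum of the ℓ¹-norm over real
1-chains `β` with `∂β = c`, where `c` is an integral 0-cycle (finitely supported,
total sum zero), is attained by an integral 1-chain. -/
theorem integral_filling_of_zero_cycle_is_mass_minimizing
    (V E : Type) (s t : E → V)
    (hconn : ∀ u v : V, Relation.ReflTransGen (graphAdj s t) u v)
    (c : V →₀ ℤ) (hc : c.sum (fun _ n => n) = 0) :
    ∃ β₀ : E →₀ ℤ,
      graphBoundary s t (Finsupp.mapRange (Int.cast : ℤ → ℝ) (by simp) β₀) =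
        Finsupp.mapRange (Int.cast : ℤ → ℝ) (by simp) c ∧
      IsLeast
        {m : ℝ | ∃ β : E →₀ ℝ,
          graphBoundary s t β = Finsupp.mapRange (Int.cast : ℤ → ℝ) (by simp) c ∧
          m = ∑ e ∈ β.support, |β e|}
        (∑ e ∈ β₀.support, |(β₀ e : ℝ)|) := by
  have hcast (γ : E →₀ ℤ) : graphBoundary s t (γ.mapRange (Int.cast : ℤ → ℝ) Int.cast_zero) =
      (graphBoundary s t γ).mapRange Int.cast Int.cast_zero := by
    simpa using graphBoundary_mapRange s t (Int.castAddHom ℝ) γ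
  obtain ⟨γ, hγ⟩ := exists_graphBoundary_eq s t hconn c hc
  set S : Set (E →₀ ℤ) := {γ | graphBoundary s t γ = c}
  set β₀ := Function.argminOn intMass S ⟨γ, hγ⟩
  have hmem : graphBoundary s t β₀ = c := Function.argminOn_mem intMass S ⟨γ, hγ⟩
  have hβ₀ : graphBoundary s t (β₀.mapRange (Int.cast : ℤ → ℝ) Int.cast_zero) =
      c.mapRange Int.cast Int.cast_zero := by
    rw [hcast, hmem]
  refine ⟨β₀, hβ₀, ⟨_, hβ₀, (intMass_cast β₀).symm.trans (mass_mapRange_intCast β₀).symm⟩, ?_⟩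
  rintro _ ⟨β, hβ, rfl⟩
  obtain ⟨γ', hγ', hmass⟩ := exists_intChain_graphBoundary_eq_intMass_le s t β fun v => by
    rw [hβ, Finsupp.mapRange_apply]
    exact ⟨c v, rfl⟩
  have hγ'c : graphBoundary s t γ' = c :=
    Finsupp.mapRange_injective _ _ Int.cast_injective (by rw [← hcast, hγ', hβ])
  calc ∑ e ∈ β₀.support, |(β₀ e : ℝ)| = intMass β₀ := (intMass_cast β₀).symm
    _ ≤ intMass γ' := Nat.cast_le.2 (Function.argminOn_le intMass S hγ'c)
    _ ≤ mass β := hmass
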